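/- arXiv:1811.00589 — 4 statements merged into one kernel-verified Lean document; each statement's English description precedes it below -/
import Mathlib

section
/- Let C ⊆ (ZMod 3)^c be a self-dual ternary code. Then the lattice Λ(C) is unimodular: Λ(C) equals its dual lattice, i.e. Λ(C) = {x ∈ ℝ^c : ∀ y ∈ Λ(C), ⟨x, y⟩ ∈ ℤ}, where ⟨·,·⟩ is the standard Euclidean inner product. -/
open scoped BigOperators

noncomputable section

/-- The standard Euclidean inner product on `ℝ^c`. -/
def inn {c : ℕ} (x y : Fin c → ℝ) : ℝ := ∑ i, x i * y i

/-- The dual of a ternary code `C ⊆ (ZMod 3)^c`. -/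
def dualCode {c : ℕ} (C : Submodule (ZMod 3) (Fin c → ZMod 3)) : Set (Fin c → ZMod 3) :=
  {w | ∀ v ∈ C, ∑ i, w i * v i = 0}

/-- A ternary code is self-dual if it equals its dual code. -/
def IsSelfDual {c : ℕ} (C : Submodule (ZMod 3) (Fin c → ZMod 3)) : Prop :=
  (C : Set (Fin c → ZMod 3)) = dualCode C

/-- The 3-framed lattice `Λ(C)` associated to a ternary code `C`:
all vectors `(1/√3)·u` with `u ∈ ℤ^c` whose mod-3 reduction lies in `C`. -/
def latticeOf {c : ℕ} (C : Submodule (ZMod 3) (Fin c → ZMod 3)) : Set (Fin c → ℝ) :=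
  {x | ∃ u : Fin c → ℤ, (fun i => ((u i : ZMod 3))) ∈ C ∧
    x = fun i => (u i : ℝ) / Real.sqrt 3}

/-!
Write `Λ(C) = {u/√3 : u ∈ ℤ^c, ū ∈ C}`. For `u, v ∈ ℤ^c` the inner product of `u/√3` and `v/√3`
is `(u·v)/3`, an integer exactly when `ū·v̄ = 0` in `𝔽₃`; so `C ⊆ C⊥` makes `Λ(C)` integral.
Conversely `Λ(C) ⊇ √3 ℤ^c`, because `3ℤ^c` reduces to `0 ∈ C`, so a vector `x` of the dual lattice
satisfies `√3 x ∈ ℤ^c`, i.e. `x = n/√3`; pairing `x` with lifts of the codewords gives `n̄ ∈ C⊥ ⊆ C`.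
-/

section Ternary

variable {c : ℕ} (C : Submodule (ZMod 3) (Fin c → ZMod 3))

def dualLattice (L : Set (Fin c → ℝ)) : Set (Fin c → ℝ) :=
  {x | ∀ y ∈ L, ∃ n : ℤ, inn x y = n}

lemma inn_div_sqrt_three (u v : Fin c → ℤ) :
    inn (fun i => (u i : ℝ) / √3) (fun i => (v i : ℝ) / √3) = ((∑ i, u i * v i : ℤ) : ℝ) / 3 := by
  have h3 : √3 * √3 = 3 := Real.mul_self_sqrt (by norm_num)
  simp only [inn, Int.cast_sum, Int.cast_mul, Finset.sum_div, div_mul_div_comm, h3]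

lemma exists_intCast_div_eq_intCast_iff_dvd {a d : ℤ} (hd : d ≠ 0) :
    (∃ n : ℤ, (a : ℝ) / d = n) ↔ d ∣ a := by
  constructor
  · rintro ⟨n, hn⟩
    exact Dvd.intro_left n (by exact_mod_cast ((div_eq_iff (by exact_mod_cast hd)).1 hn).symm)
  · rintro ⟨n, rfl⟩
    exact ⟨n, by push_cast; field_simp⟩

lemma exists_inn_div_sqrt_three_eq_intCast_iff (u v : Fin c → ℤ) :
    (∃ n : ℤ, inn (fun i => (u i : ℝ) / √3) (fun i => (v i : ℝ) / √3) = n) ↔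
      ∑ i, (u i : ZMod 3) * (v i : ZMod 3) = 0 := by
  rw [inn_div_sqrt_three, ← Int.cast_ofNat, exists_intCast_div_eq_intCast_iff_dvd three_ne_zero]
  exact_mod_cast (ZMod.intCast_zmod_eq_zero_iff_dvd _ 3).symm

lemma latticeOf_subset_dualLattice (hC : (C : Set (Fin c → ZMod 3)) ⊆ dualCode C) :
    latticeOf C ⊆ dualLattice (latticeOf C) := by
  rintro _ ⟨u, hu, rfl⟩ _ ⟨v, hv, rfl⟩
  exact (exists_inn_div_sqrt_three_eq_intCast_iff u v).2 (hC hu _ hv)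

lemma sqrt_three_mul_mem_latticeOf (w : Fin c → ℤ) : (fun i => √3 * w i) ∈ latticeOf C := by
  refine ⟨fun i => 3 * w i, ?_, ?_⟩
  · convert C.zero_mem using 1
    ext i
    rw [Int.cast_mul, show ((3 : ℤ) : ZMod 3) = 0 from rfl, zero_mul, Pi.zero_apply]
  · ext i
    rw [eq_div_iff (by positivity), mul_right_comm, Real.mul_self_sqrt (by norm_num)]
    push_cast
    rfl

lemma exists_eq_div_sqrt_three_of_mem_dualLattice {x : Fin c → ℝ}
    (hx : x ∈ dualLattice (latticeOf C)) : ∃ n : Fin c → ℤ, x = fun i => (n i : ℝ) / √3 := by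
  have hcoord : ∀ i, ∃ n : ℤ, x i = n / √3 := fun i => by
    -- pair `x` with `√3 eᵢ ∈ Λ(C)`
    obtain ⟨n, hn⟩ := hx _ (sqrt_three_mul_mem_latticeOf C (Pi.single i 1))
    refine ⟨n, (eq_div_iff (by positivity)).2 ?_⟩
    simpa [inn, Pi.single_apply] using hn
  choose n hn using hcoord
  exact ⟨n, funext hn⟩

lemma dualLattice_subset_latticeOf (hC : dualCode C ⊆ C) :
    dualLattice (latticeOf C) ⊆ latticeOf C := by
  intro x hx
  obtain ⟨n, rfl⟩ := exists_eq_div_sqrt_three_of_mem_dualLattice C hx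
  refine ⟨n, hC fun v hv => ?_, rfl⟩
  obtain ⟨w, rfl⟩ := ZMod.intCast_surjective.comp_left v
  exact (exists_inn_div_sqrt_three_eq_intCast_iff n w).1 (hx _ ⟨w, hv, rfl⟩)

end Ternary

theorem latticeOf_unimodular {c : ℕ}
    (C : Submodule (ZMod 3) (Fin c → ZMod 3)) (hC : IsSelfDual C) :
    latticeOf C = {x : Fin c → ℝ | ∀ y ∈ latticeOf C, ∃ n : ℤ, inn x y = (n : ℝ)} :=
  (latticeOf_subset_dualLattice C hC.le).antisymm (dualLattice_subset_latticeOf C hC.ge)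
end
end

section
/- Let C ⊆ (ZMod 3)^c be a self-dual ternary code and χ = √3·(1,1,…,1) ∈ ℝ^c. Then: (i) for every λ ∈ Λ(C), 12·‖λ + χ/2‖² ≥ c; and (ii) the map w ↦ (1/(2√3))·ι(w) − χ/2, where ι : ZMod 3 → ℤ sends 0, 1, 2 to 0, 1, −1 and is applied coordinatewise, is a bijection from the set of maximal codewords of C onto the set {λ ∈ Λ(C) : 12·‖λ + χ/2‖² = c}. -/
open scoped BigOperators

noncomputable section

/-- A word is maximal if all of its coordinates are nonzero. -/
def IsMaximalWord {c : ℕ} (w : Fin c → ZMod 3) : Prop :=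
  ∀ i, w i ≠ 0

/-- The vector `χ = √3·(1,1,…,1) ∈ ℝ^c`. -/
def theChi (c : ℕ) : Fin c → ℝ := fun _ => Real.sqrt 3

/-- The canonical injection `ι : ZMod 3 → ℤ` sending `0, 1, 2` to `0, 1, -1`. -/
def iota : ZMod 3 → ℤ := fun a => if a = 0 then 0 else if a = 1 then 1 else -1
/-!
Write `λ = u / √3` with `u ∈ ℤ^c`. Then `12 ‖λ + χ/2‖² = ∑ (2 uᵢ + 3)²` is a sum of `c` odd squares,
so it is at least `c`, with equality iff every `2 uᵢ + 3 = ±1`, i.e. `uᵢ ∈ {-1, -2}`. These `u`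
are exactly the vectors with `ι(wᵢ) = 2 uᵢ + 3` for a maximal word `w`, and then `w ≡ -u (mod 3)`.
-/

open Real

section

variable {c : ℕ}

lemma div_sqrt_three_add_sqrt_three_div_two (x : ℝ) :
    x / √3 + √3 / 2 = (2 * x + 3) / (2 * √3) := by
  have h3 : √3 ^ 2 = 3 := sq_sqrt (by norm_num)
  field_simp
  linear_combination h3

lemma twelve_mul_sq_div_sqrt_three_add (x : ℝ) :
    12 * (x / √3 + √3 / 2) ^ 2 = (2 * x + 3) ^ 2 := by
  rw [div_sqrt_three_add_sqrt_three_div_two, div_pow, mul_pow, sq_sqrt (by norm_num)]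
  ring

lemma one_le_sq_two_mul_add_three (n : ℤ) : 1 ≤ (2 * n + 3) ^ 2 := by
  have : 2 * n + 3 ≠ 0 := by omega
  nlinarith [sq_pos_of_ne_zero this]

lemma sq_two_mul_add_three_eq_one_iff (n : ℤ) : (2 * n + 3) ^ 2 = 1 ↔ n = -1 ∨ n = -2 := by
  constructor
  · intro h
    have : (2 * n + 2) * (2 * n + 4) = 0 := by linear_combination h
    rcases mul_eq_zero.mp this with h' | h' <;> omega
  · rintro (rfl | rfl) <;> norm_num

lemma intCast_two_mul_add_three (n : ℤ) : ((2 * n + 3 : ℤ) : ZMod 3) = -(n : ZMod 3) := by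
  have h : (3 : ZMod 3) = 0 := rfl
  push_cast
  linear_combination (n + 1) * h

lemma card_le_sum_sq_two_mul_add_three (u : Fin c → ℤ) : (c : ℤ) ≤ ∑ i, (2 * u i + 3) ^ 2 := by
  calc (c : ℤ) = ∑ _i : Fin c, 1 := by simp
    _ ≤ _ := Finset.sum_le_sum fun i _ => one_le_sq_two_mul_add_three (u i)

lemma sum_sq_two_mul_add_three_eq_card_iff (u : Fin c → ℤ) :
    ∑ i, (2 * u i + 3) ^ 2 = (c : ℤ) ↔ ∀ i, (2 * u i + 3) ^ 2 = 1 := by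
  have h := Finset.sum_eq_sum_iff_of_le (s := Finset.univ) (f := fun _ => (1 : ℤ))
    fun i _ => one_le_sq_two_mul_add_three (u i)
  simp only [Finset.sum_const, Finset.card_univ, Fintype.card_fin, nsmul_eq_mul, mul_one,
    Finset.mem_univ, forall_const] at h
  rw [eq_comm, h]
  exact forall_congr' fun _ => eq_comm

lemma iota_injective : Function.Injective iota := by decide

lemma intCast_iota (a : ZMod 3) : ((iota a : ℤ) : ZMod 3) = a := by
  revert a; decide

lemma iota_ne_zero_iff (a : ZMod 3) : iota a ≠ 0 ↔ a ≠ 0 := by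
  revert a; decide

lemma iota_eq_two_mul_add_three {a : ZMod 3} (ha : a ≠ 0) :
    ∃ n : ℤ, iota a = 2 * n + 3 ∧ (n = -1 ∨ n = -2) := by
  fin_cases a
  · exact absurd rfl ha
  · exact ⟨-1, rfl, by norm_num⟩
  · exact ⟨-2, rfl, by norm_num⟩

lemma iota_intCast_two_mul_add_three {n : ℤ} (hn : n = -1 ∨ n = -2) :
    iota ((2 * n + 3 : ℤ) : ZMod 3) = 2 * n + 3 := by
  rcases hn with rfl | rfl <;> rfl

def shiftedEnergy (l : Fin c → ℝ) : ℝ :=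
  12 * inn (l + (1/2 : ℝ) • theChi c) (l + (1/2 : ℝ) • theChi c)

def groundStateOf (w : Fin c → ZMod 3) : Fin c → ℝ :=
  fun i => (iota (w i) : ℝ) / (2 * √3) - √3 / 2

lemma shiftedEnergy_div_sqrt_three (u : Fin c → ℤ) :
    shiftedEnergy (fun i => (u i : ℝ) / √3) = ((∑ i, (2 * u i + 3) ^ 2 : ℤ) : ℝ) := by
  simp only [shiftedEnergy, inn, theChi, Finset.mul_sum, Pi.add_apply, Pi.smul_apply,
    smul_eq_mul, ← sq]
  push_cast
  refine Finset.sum_congr rfl fun i _ => ?_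
  rw [← twelve_mul_sq_div_sqrt_three_add]
  ring

lemma card_le_shiftedEnergy {C : Submodule (ZMod 3) (Fin c → ZMod 3)} {l : Fin c → ℝ}
    (hl : l ∈ latticeOf C) : (c : ℝ) ≤ shiftedEnergy l := by
  obtain ⟨u, -, rfl⟩ := hl
  rw [shiftedEnergy_div_sqrt_three]
  exact_mod_cast card_le_sum_sq_two_mul_add_three u

lemma groundStateOf_injective : Function.Injective (groundStateOf (c := c)) := by
  intro w₁ w₂ h
  funext i
  have h3 : (0 : ℝ) < 2 * √3 := by positivity
  have hi := congrFun h i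
  simp only [groundStateOf, sub_left_inj, div_left_inj' h3.ne', Int.cast_inj] at hi
  exact iota_injective hi

lemma groundStateOf_eq_div_sqrt_three {w : Fin c → ZMod 3} {u : Fin c → ℤ}
    (hu : ∀ i, iota (w i) = 2 * u i + 3) : groundStateOf w = fun i => (u i : ℝ) / √3 := by
  funext i
  rw [groundStateOf, hu i]
  push_cast
  rw [← div_sqrt_three_add_sqrt_three_div_two, add_sub_cancel_right]

lemma groundStateOf_mem_of_isMaximalWord {C : Submodule (ZMod 3) (Fin c → ZMod 3)}
    {w : Fin c → ZMod 3} (hw : w ∈ C) (hmax : IsMaximalWord w) :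
    groundStateOf w ∈ latticeOf C ∧ shiftedEnergy (groundStateOf w) = c := by
  choose u hu hground using fun i => iota_eq_two_mul_add_three (hmax i)
  have hl := groundStateOf_eq_div_sqrt_three hu
  have hC : (fun i => (u i : ZMod 3)) = -w := by
    funext i
    rw [Pi.neg_apply, ← intCast_iota (w i), hu i, intCast_two_mul_add_three, neg_neg]
  refine ⟨⟨u, hC ▸ neg_mem hw, hl⟩, ?_⟩
  rw [hl, shiftedEnergy_div_sqrt_three, (sum_sq_two_mul_add_three_eq_card_iff u).mpr
    fun i => (sq_two_mul_add_three_eq_one_iff _).mpr (hground i)]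
  norm_cast

lemma exists_isMaximalWord_of_shiftedEnergy_eq {C : Submodule (ZMod 3) (Fin c → ZMod 3)}
    {l : Fin c → ℝ} (hl : l ∈ latticeOf C) (henergy : shiftedEnergy l = c) :
    ∃ w ∈ C, IsMaximalWord w ∧ groundStateOf w = l := by
  obtain ⟨u, hu, rfl⟩ := hl
  rw [shiftedEnergy_div_sqrt_three] at henergy
  have hground : ∀ i, u i = -1 ∨ u i = -2 := fun i => (sq_two_mul_add_three_eq_one_iff _).mp
    ((sum_sq_two_mul_add_three_eq_card_iff u).mp (by exact_mod_cast henergy) i)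
  have hw : (-fun i => (u i : ZMod 3)) = fun i => ((2 * u i + 3 : ℤ) : ZMod 3) := by
    funext i
    rw [Pi.neg_apply, intCast_two_mul_add_three]
  refine ⟨_, neg_mem hu, fun i => ?_, ?_⟩
  · rw [hw, ← iota_ne_zero_iff, iota_intCast_two_mul_add_three (hground i)]
    omega
  · rw [hw]
    exact groundStateOf_eq_div_sqrt_three fun i => iota_intCast_two_mul_add_three (hground i)

end

theorem ground_states_biject_with_maximal_codewords_general {c : ℕ}
    (C : Submodule (ZMod 3) (Fin c → ZMod 3)) :
    (∀ l ∈ latticeOf C,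
      (c : ℝ) ≤ 12 * inn (l + (1/2 : ℝ) • theChi c) (l + (1/2 : ℝ) • theChi c)) ∧
    Set.BijOn
      (fun w : Fin c → ZMod 3 => fun i : Fin c =>
        (iota (w i) : ℝ) / (2 * Real.sqrt 3) - Real.sqrt 3 / 2)
      {w : Fin c → ZMod 3 | w ∈ C ∧ IsMaximalWord w}
      {l : Fin c → ℝ | l ∈ latticeOf C ∧
        12 * inn (l + (1/2 : ℝ) • theChi c) (l + (1/2 : ℝ) • theChi c) = (c : ℝ)} := by
  refine ⟨fun l hl => card_le_shiftedEnergy hl, ?_, groundStateOf_injective.injOn, ?_⟩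
  · exact fun w ⟨hw, hmax⟩ => groundStateOf_mem_of_isMaximalWord hw hmax
  · rintro l ⟨hl, henergy⟩
    obtain ⟨w, hw, hmax, rfl⟩ := exists_isMaximalWord_of_shiftedEnergy_eq hl henergy
    exact ⟨w, ⟨hw, hmax⟩, rfl⟩

theorem ground_states_biject_with_maximal_codewords {c : ℕ}
    (C : Submodule (ZMod 3) (Fin c → ZMod 3)) (hC : IsSelfDual C) :
    (∀ l ∈ latticeOf C,
      (c : ℝ) ≤ 12 * inn (l + (1/2 : ℝ) • theChi c) (l + (1/2 : ℝ) • theChi c)) ∧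
    Set.BijOn
      (fun w : Fin c → ZMod 3 => fun i : Fin c =>
        (iota (w i) : ℝ) / (2 * Real.sqrt 3) - Real.sqrt 3 / 2)
      {w : Fin c → ZMod 3 | w ∈ C ∧ IsMaximalWord w}
      {l : Fin c → ℝ | l ∈ latticeOf C ∧
        12 * inn (l + (1/2 : ℝ) • theChi c) (l + (1/2 : ℝ) • theChi c) = (c : ℝ)} :=
  ground_states_biject_with_maximal_codewords_general C
end
end

section
/- Let C ⊆ (ZMod 3)^c be a self-dual ternary code and χ = √3·(1,1,…,1) ∈ ℝ^c. Then the set S = {λ ∈ Λ(C) : 12·‖λ + χ/2‖² = c} is finite, and ∑_{λ ∈ S} (−1)^{⟨χ, λ⟩} = Index(C), where each ⟨χ, λ⟩ is an integer. -/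
open scoped BigOperators

noncomputable section

/-- The number of coordinates of a word equal to `1`. -/
def onesCount {c : ℕ} (w : Fin c → ZMod 3) : ℕ :=
  (Finset.univ.filter fun i => w i = 1).card

/-- The index of a ternary code: the number of even maximal codewords minus
the number of odd maximal codewords. -/
def codeIndex {c : ℕ} (C : Submodule (ZMod 3) (Fin c → ZMod 3)) : ℤ :=
  ({w : Fin c → ZMod 3 | w ∈ C ∧ IsMaximalWord w ∧ Even (onesCount w)}.ncard : ℤ)
    - ({w : Fin c → ZMod 3 | w ∈ C ∧ IsMaximalWord w ∧ ¬ Even (onesCount w)}.ncard : ℤ)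

/-!
A point `u / √3` of `Λ(C)` satisfies `12‖u/√3 + χ/2‖² = ∑ᵢ (2uᵢ + 3)²`, a sum of `c` odd squares,
so it equals `c` exactly when every `uᵢ ∈ {-1, -2}`. Such a `u` is the unique lift with these
entries of its reduction `w`, which is then a maximal codeword; conversely every maximal codeword
lifts this way (`1 ↦ -2`, `2 ↦ -1`). Hence the ground states are in bijection with the maximal
codewords, and `⟨χ, u/√3⟩ = ∑ᵢ uᵢ = -#{i | wᵢ = 1} - c`. A self-dual code has dimension `c/2`,
so `c` is even and the sign `(-1)^⟨χ, λ⟩` is the parity of `w`.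
-/

theorem Int.sum_sq_eq_card_iff {ι : Type*} [Fintype ι] {f : ι → ℤ} (hf : ∀ i, f i ≠ 0) :
    ∑ i, f i ^ 2 = Fintype.card ι ↔ ∀ i, f i ^ 2 = 1 := by
  have hle : ∀ i ∈ Finset.univ, (1 : ℤ) ≤ f i ^ 2 := fun i _ => by
    nlinarith [Int.one_le_abs (hf i), sq_abs (f i)]
  simpa [eq_comm] using Finset.sum_eq_sum_iff_of_le hle

open Matrix in
theorem IsSelfDual.two_mul_finrank {c : ℕ} {C : Submodule (ZMod 3) (Fin c → ZMod 3)}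
    (hC : IsSelfDual C) : 2 * Module.finrank (ZMod 3) C = c := by
  let B : LinearMap.BilinForm (ZMod 3) (Fin c → ZMod 3) := dotProductBilin (ZMod 3) (ZMod 3)
  have hrefl : B.IsRefl := fun x y h => by simpa [B, dotProduct_comm] using h
  have hnondeg : B.Nondegenerate :=
    hrefl.nondegenerate_iff_separatingLeft.mpr fun x hx => dotProduct_eq_zero x hx
  have hperp : B.orthogonal C = C := by
    ext v
    rw [LinearMap.BilinForm.mem_orthogonal_iff, ← SetLike.mem_coe, hC]
    simp [B, dualCode, dotProduct, mul_comm]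
  have := LinearMap.BilinForm.finrank_orthogonal hnondeg C
  rw [hperp, Module.finrank_fin_fun] at this
  omega

section GroundStates

variable {c : ℕ}

def latticePoint (u : Fin c → ℤ) : Fin c → ℝ := fun i => (u i : ℝ) / Real.sqrt 3

theorem latticePoint_injective : Function.Injective (latticePoint (c := c)) := fun u v h =>
  funext fun i => by
    have := congrFun h i
    simp only [latticePoint, div_left_inj' (Real.sqrt_ne_zero'.mpr three_pos)] at this
    exact_mod_cast this

theorem mem_latticeOf_iff {C : Submodule (ZMod 3) (Fin c → ZMod 3)} {l : Fin c → ℝ} :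
    l ∈ latticeOf C ↔ ∃ u : Fin c → ℤ, (fun i => (u i : ZMod 3)) ∈ C ∧ l = latticePoint u :=
  Iff.rfl

theorem twelve_mul_inn_latticePoint_add_half_theChi (u : Fin c → ℤ) :
    12 * inn (latticePoint u + (1/2 : ℝ) • theChi c) (latticePoint u + (1/2 : ℝ) • theChi c)
      = ((∑ i, (2 * u i + 3) ^ 2 : ℤ) : ℝ) := by
  have h3 : Real.sqrt 3 ^ 2 = 3 := Real.sq_sqrt three_pos.le
  simp only [inn, latticePoint, theChi, Finset.mul_sum, Pi.add_apply, Pi.smul_apply, smul_eq_mul]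
  push_cast
  refine Finset.sum_congr rfl fun i _ => ?_
  field_simp
  rw [h3]
  ring

theorem inn_theChi_latticePoint (u : Fin c → ℤ) :
    inn (theChi c) (latticePoint u) = ((∑ i, u i : ℤ) : ℝ) := by
  have hne : Real.sqrt 3 ≠ 0 := Real.sqrt_ne_zero'.mpr three_pos
  simp only [inn, theChi, latticePoint, mul_div_cancel₀ _ hne]
  push_cast
  rfl

theorem sum_two_mul_add_three_sq_eq_iff (u : Fin c → ℤ) :
    ∑ i, (2 * u i + 3) ^ 2 = (c : ℤ) ↔ ∀ i, u i = -1 ∨ u i = -2 := by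
  have h := Int.sum_sq_eq_card_iff (f := fun i => 2 * u i + 3) fun i => by omega
  rw [Fintype.card_fin] at h
  rw [h]
  refine forall_congr' fun i => ?_
  rw [sq_eq_one_iff]
  omega

def groundLift (w : Fin c → ZMod 3) : Fin c → ℤ := fun i => if w i = 1 then -2 else -1

theorem groundLift_eq_neg_one_or_neg_two (w : Fin c → ZMod 3) (i : Fin c) :
    groundLift w i = -1 ∨ groundLift w i = -2 := by
  unfold groundLift
  split_ifs <;> simp

theorem cast_groundLift {w : Fin c → ZMod 3} (hw : IsMaximalWord w) :
    (fun i => (groundLift w i : ZMod 3)) = w := funext fun i => by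
  have key : ∀ a : ZMod 3, a ≠ 0 → (((if a = 1 then -2 else -1 : ℤ)) : ZMod 3) = a := by decide
  exact key _ (hw i)

theorem groundLift_cast {u : Fin c → ℤ} (hu : ∀ i, u i = -1 ∨ u i = -2) :
    groundLift (fun i => (u i : ZMod 3)) = u := funext fun i => by
  rcases hu i with h | h <;> simp only [groundLift, h] <;> decide

theorem isMaximalWord_cast {u : Fin c → ℤ} (hu : ∀ i, u i = -1 ∨ u i = -2) :
    IsMaximalWord (fun i => (u i : ZMod 3)) := fun i => by
  rcases hu i with h | h <;> simp only [h] <;> decide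

theorem sum_groundLift (w : Fin c → ZMod 3) : ∑ i, groundLift w i = -(onesCount w : ℤ) - c := by
  have h : ∀ i, groundLift w i = -(if w i = 1 then 1 else 0) - 1 := fun i => by
    unfold groundLift
    split_ifs <;> norm_num
  simp [h, Finset.sum_sub_distrib, Finset.sum_boole, onesCount]

theorem negOnePow_floor_inn_theChi_groundLift (hc : Even c) (w : Fin c → ZMod 3) :
    (⌊inn (theChi c) (latticePoint (groundLift w))⌋).negOnePow = (onesCount w : ℤ).negOnePow := by
  rw [inn_theChi_latticePoint, Int.floor_intCast, sum_groundLift, Int.negOnePow_sub,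
    Int.negOnePow_neg, Int.negOnePow_even _ hc.natCast, mul_one]

-- Reducible, so that `rw` sees it in the set written out in the main theorem.
abbrev groundStates (C : Submodule (ZMod 3) (Fin c → ZMod 3)) : Set (Fin c → ℝ) :=
  {l | l ∈ latticeOf C ∧ 12 * inn (l + (1/2 : ℝ) • theChi c) (l + (1/2 : ℝ) • theChi c) = c}

open Classical in
def maximalCodewords (C : Submodule (ZMod 3) (Fin c → ZMod 3)) : Finset (Fin c → ZMod 3) :=
  Finset.univ.filter fun w => w ∈ C ∧ IsMaximalWord w

@[simp]
theorem mem_maximalCodewords {C : Submodule (ZMod 3) (Fin c → ZMod 3)} {w : Fin c → ZMod 3} :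
    w ∈ maximalCodewords C ↔ w ∈ C ∧ IsMaximalWord w := by
  simp [maximalCodewords]

open Classical in
theorem groundStates_eq_image (C : Submodule (ZMod 3) (Fin c → ZMod 3)) :
    groundStates C = (maximalCodewords C).image (latticePoint ∘ groundLift) := by
  ext l
  simp only [groundStates, mem_latticeOf_iff, Finset.coe_image, Set.mem_image, Finset.mem_coe,
    mem_maximalCodewords, Set.mem_ofPred_eq, Function.comp_apply]
  constructor
  · rintro ⟨⟨u, huC, rfl⟩, hnorm⟩
    rw [twelve_mul_inn_latticePoint_add_half_theChi] at hnorm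
    have hu := (sum_two_mul_add_three_sq_eq_iff u).mp (by exact_mod_cast hnorm)
    exact ⟨_, ⟨huC, isMaximalWord_cast hu⟩, by rw [groundLift_cast hu]⟩
  · rintro ⟨w, ⟨hwC, hw⟩, rfl⟩
    refine ⟨⟨groundLift w, by rwa [cast_groundLift hw], rfl⟩, ?_⟩
    rw [twelve_mul_inn_latticePoint_add_half_theChi,
      (sum_two_mul_add_three_sq_eq_iff _).mpr (groundLift_eq_neg_one_or_neg_two w)]
    push_cast
    rfl

theorem injOn_latticePoint_groundLift (C : Submodule (ZMod 3) (Fin c → ZMod 3)) :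
    Set.InjOn (latticePoint ∘ groundLift) (maximalCodewords C : Set (Fin c → ZMod 3)) := by
  intro w hw w' hw' h
  rw [← cast_groundLift (mem_maximalCodewords.mp hw).2,
    ← cast_groundLift (mem_maximalCodewords.mp hw').2, latticePoint_injective h]

theorem codeIndex_eq_sum_negOnePow (C : Submodule (ZMod 3) (Fin c → ZMod 3)) :
    codeIndex C = ∑ w ∈ maximalCodewords C, ((onesCount w : ℤ).negOnePow : ℤ) := by
  classical
  have hfilter (p : ℕ → Prop) [DecidablePred p] :
      {w | w ∈ C ∧ IsMaximalWord w ∧ p (onesCount w)}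
        = ↑((maximalCodewords C).filter fun w => p (onesCount w)) := by
    ext w
    simp [and_assoc]
  simp only [Int.coe_negOnePow_natCast, neg_one_pow_eq_ite, Finset.sum_ite, Finset.sum_const]
  rw [codeIndex, hfilter Even, hfilter (¬ Even ·), Set.ncard_coe_finset, Set.ncard_coe_finset]
  simp
  ring

end GroundStates

theorem signed_count_of_ground_states_is_index {c : ℕ}
    (C : Submodule (ZMod 3) (Fin c → ZMod 3)) (hC : IsSelfDual C) :
    ∃ hfin : {l : Fin c → ℝ | l ∈ latticeOf C ∧
        12 * inn (l + (1/2 : ℝ) • theChi c) (l + (1/2 : ℝ) • theChi c) = (c : ℝ)}.Finite,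
      (∀ l ∈ hfin.toFinset, ∃ n : ℤ, inn (theChi c) l = (n : ℝ)) ∧
      ∑ l ∈ hfin.toFinset, ((Int.negOnePow ⌊inn (theChi c) l⌋ : ℤˣ) : ℤ) = codeIndex C := by
  classical
  have hc : Even c := hC.two_mul_finrank ▸ even_two_mul _
  have hfin : (groundStates C).Finite := groundStates_eq_image C ▸ Finset.finite_toSet _
  have htoFinset : hfin.toFinset = (maximalCodewords C).image (latticePoint ∘ groundLift) :=
    Finset.coe_injective (by rw [hfin.coe_toFinset, groundStates_eq_image])
  refine ⟨hfin, ?_, ?_⟩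
  · intro l hl
    rw [htoFinset, Finset.mem_image] at hl
    obtain ⟨w, -, rfl⟩ := hl
    exact ⟨_, inn_theChi_latticePoint _⟩
  · rw [htoFinset, Finset.sum_image (injOn_latticePoint_groundLift C), codeIndex_eq_sum_negOnePow]
    exact Finset.sum_congr rfl fun w _ => by
      rw [Function.comp_apply, negOnePow_floor_inn_theChi_groundLift hc]
end
end

section
/- Let k ≥ 1, c = 12k, and m = gcd(24, k), and suppose m is even. Let g = (σ, ε) be a signed permutation of the c coordinates (σ a permutation of Fin c and ε : Fin c → {1, −1}, acting on ℝ^c by (g·x)_i = ε_i · x_{σ⁻¹(i)}) such that g has order m, g^{m/2} acts as −1 (negation of every coordinate), and, if 3 divides m, the permutation part of g^{m/3} is a product of c/3 disjoint 3-cycles with no fixed points. Then, with χ = √3·(1,1,…,1) ∈ ℝ^c, the integer ⟨χ, χ − g(χ)⟩ is divisible by 4. -/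
/-!
Since `⟨χ, χ - g χ⟩ = 6 · #{i | ε i = -1}`, it suffices that `g` flips an even number of signs,
i.e. that the permutation `π` which `g` induces on the `2c` vectors `±eᵢ` is even.
Now `π ^ m = 1`, and `π ^ (m / 2)` has no fixed point because `g ^ (m / 2) = -1`. Writing
`m = 2 ^ (a + 1) * m'` with `m'` odd, the odd power `π ^ m'` has the same sign as `π`, and all its
cycles have length exactly `2 ^ (a + 1)`. As `2 ^ (a + 2)` divides `2c = 24k`, there is an even
number of them, so `π` is even.
-/

open scoped BigOperators

noncomputable section

/-- A linear automorphism of `ℝ^c` is a signed coordinate permutation with permutation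
part `σ` and sign part `ε` if it acts by `(g·x) i = ε i * x (σ⁻¹ i)`. -/
def IsSignedPerm {c : ℕ} (g : (Fin c → ℝ) ≃ₗ[ℝ] (Fin c → ℝ))
    (σ : Equiv.Perm (Fin c)) (ε : Fin c → ℝ) : Prop :=
  (∀ i, ε i = 1 ∨ ε i = -1) ∧ ∀ (x : Fin c → ℝ) (i : Fin c), g x i = ε i * x (σ⁻¹ i)

open Finset Equiv

namespace Equiv.Perm

variable {α : Type*} [Fintype α] [DecidableEq α]

theorem exists_card_support_cycleOf_eq_of_mem_cycleType {π : Perm α} {L : ℕ}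
    (hL : L ∈ π.cycleType) : ∃ x, #(π.cycleOf x).support = L := by
  rw [cycleType_def, Multiset.mem_map] at hL
  obtain ⟨c, hc, rfl⟩ := hL
  obtain ⟨x, hx⟩ := (mem_cycleFactorsFinset_iff.mp hc).1.nonempty_support
  exact ⟨x, by rw [← cycle_is_cycleOf hx hc]; rfl⟩

theorem pow_apply_eq_self_of_card_support_cycleOf_dvd {π : Perm α} {x : α} {n : ℕ}
    (h : #(π.cycleOf x).support ∣ n) : (π ^ n) x = x := by
  rw [← pow_mod_card_support_cycleOf_self_apply, Nat.mod_eq_zero_of_dvd h, pow_zero, one_apply]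

theorem eq_two_pow_of_mem_cycleType {ρ : Perm α} {a L : ℕ} (h1 : ρ ^ 2 ^ (a + 1) = 1)
    (h2 : ∀ x, (ρ ^ 2 ^ a) x ≠ x) (hL : L ∈ ρ.cycleType) : L = 2 ^ (a + 1) := by
  obtain ⟨e, he, rfl⟩ := (Nat.dvd_prime_pow Nat.prime_two).mp
    ((dvd_of_mem_cycleType hL).trans (orderOf_dvd_of_pow_eq_one h1))
  obtain rfl | he : e = a + 1 ∨ e ≤ a := by omega
  · rfl
  obtain ⟨x, hx⟩ := exists_card_support_cycleOf_eq_of_mem_cycleType hL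
  exact absurd (pow_apply_eq_self_of_card_support_cycleOf_dvd
    (hx ▸ Nat.pow_dvd_pow 2 he)) (h2 x)

theorem support_eq_univ_of_pow_apply_ne {π : Perm α} {n : ℕ} (h : ∀ x, (π ^ n) x ≠ x) :
    π.support = Finset.univ :=
  Finset.eq_univ_of_forall fun x =>
    mem_support.mpr fun hx => h x (pow_apply_eq_self_of_apply_eq_self hx n)

theorem sign_eq_one_of_pow_two_pow_eq_one {ρ : Perm α} {a : ℕ} (h1 : ρ ^ 2 ^ (a + 1) = 1)
    (h2 : ∀ x, (ρ ^ 2 ^ a) x ≠ x) (hcard : 2 ^ (a + 2) ∣ Fintype.card α) :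
    sign ρ = 1 := by
  have hsum : ρ.cycleType.sum = Fintype.card α := by
    rw [sum_cycleType, support_eq_univ_of_pow_apply_ne h2, card_univ]
  rw [Multiset.eq_replicate_card.mpr fun L hL => eq_two_pow_of_mem_cycleType h1 h2 hL,
    Multiset.sum_replicate, smul_eq_mul] at hsum
  obtain ⟨d, hd⟩ := hcard
  have hcycles : Multiset.card ρ.cycleType = 2 * d :=
    Nat.eq_of_mul_eq_mul_right (by positivity) (hsum.trans (by rw [hd]; ring))
  rw [sign_of_cycleType, sum_cycleType, support_eq_univ_of_pow_apply_ne h2, card_univ,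
    hcycles, hd]
  exact Even.neg_one_pow ⟨2 ^ (a + 1) * d + d, by ring⟩

theorem sign_eq_one_of_pow_eq_one {π : Perm α} {m : ℕ} (hm : Even m) (h1 : π ^ m = 1)
    (h2 : ∀ x, (π ^ (m / 2)) x ≠ x) (hcard : 2 * m ∣ Fintype.card α) : sign π = 1 := by
  rcases eq_or_ne m 0 with rfl | hm0
  · have : IsEmpty α := ⟨fun x => h2 x rfl⟩
    rw [Subsingleton.elim π 1, map_one]
  obtain ⟨b, m', hm', rfl⟩ := Nat.exists_eq_two_pow_mul_odd hm0
  obtain ⟨a, rfl⟩ : ∃ a, b = a + 1 := Nat.exists_eq_succ_of_ne_zero <| by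
    rintro rfl
    exact Nat.not_even_iff_odd.mpr (by simpa using hm') hm
  have hhalf : 2 ^ (a + 1) * m' / 2 = 2 ^ a * m' := by
    rw [pow_succ, mul_right_comm, Nat.mul_div_cancel _ two_pos]
  calc sign π = sign π ^ m' := by
        rw [Int.units_pow_eq_pow_mod_two, Nat.odd_iff.mp hm', pow_one]
    _ = sign (π ^ m') := (map_pow _ _ _).symm
    _ = 1 := by
      refine sign_eq_one_of_pow_two_pow_eq_one (a := a) ?_ ?_ ?_
      · rw [← pow_mul, mul_comm, h1]
      · rw [← pow_mul, mul_comm, ← hhalf]; exact h2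
      · exact (Dvd.intro m' (by ring)).trans hcard

end Equiv.Perm

section LiftPerm

variable {ι : Type*}

/-- The permutation of the signed basis vectors `(i, b) ↔ (-1) ^ b • e i` induced by the signed
permutation `(σ, ε)`. -/
def liftPerm (σ : Perm ι) (ε : ι → ℝ) : Perm (ι × Bool) :=
  prodCongrRight (fun i => if ε i = -1 then swap false true else 1) * prodCongrLeft fun _ => σ

theorem liftPerm_apply (σ : Perm ι) (ε : ι → ℝ) (i : ι) (b : Bool) :
    liftPerm σ ε (i, b) = (σ i, if ε (σ i) = -1 then !b else b) := by
  by_cases h : ε (σ i) = -1 <;> cases b <;> simp [liftPerm, h]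

theorem liftPerm_mul {σ τ : Perm ι} {ε δ : ι → ℝ}
    (hε : ∀ i, ε i = 1 ∨ ε i = -1) (hδ : ∀ i, δ i = 1 ∨ δ i = -1) :
    liftPerm σ ε * liftPerm τ δ = liftPerm (σ * τ) fun i => ε i * δ (σ⁻¹ i) := by
  ext ⟨i, b⟩ : 1
  simp only [Perm.mul_apply, liftPerm_apply, Perm.inv_eq_iff_eq.mpr rfl]
  rcases hε (σ (τ i)) with h1 | h1 <;> rcases hδ (τ i) with h2 | h2 <;> norm_num [h1, h2]

theorem liftPerm_one_one : liftPerm (1 : Perm ι) (fun _ => 1) = 1 := by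
  ext ⟨i, b⟩ : 1
  norm_num [liftPerm_apply]

theorem liftPerm_one_neg_one_apply_ne (p : ι × Bool) :
    liftPerm (1 : Perm ι) (fun _ => -1) p ≠ p := by
  obtain ⟨i, b⟩ := p
  norm_num [liftPerm_apply]

theorem sign_liftPerm [Fintype ι] [DecidableEq ι] (σ : Perm ι) (ε : ι → ℝ) :
    Perm.sign (liftPerm σ ε) = (-1) ^ #{i | ε i = -1} := by
  have hsign : ∀ i, Perm.sign (if ε i = -1 then swap false true else 1) =
      if ε i = -1 then -1 else 1 := by
    intro i
    split_ifs <;> simp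
  rw [liftPerm, map_mul, Perm.sign_prodCongrRight, Perm.sign_prodCongrLeft, prod_const,
    card_univ, Fintype.card_bool, Int.units_pow_two, mul_one, Finset.prod_congr rfl
    fun i _ => hsign i, prod_ite, prod_const, prod_const_one, mul_one]

end LiftPerm

namespace IsSignedPerm

variable {c : ℕ} {g h : (Fin c → ℝ) ≃ₗ[ℝ] (Fin c → ℝ)} {σ τ : Perm (Fin c)} {ε δ : Fin c → ℝ}

theorem one : IsSignedPerm (c := c) 1 1 fun _ => 1 :=
  ⟨fun _ => Or.inl rfl, fun _ _ => by simp⟩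

theorem mul (hg : IsSignedPerm g σ ε) (hh : IsSignedPerm h τ δ) :
    IsSignedPerm (g * h) (σ * τ) fun i => ε i * δ (σ⁻¹ i) := by
  refine ⟨fun i => ?_, fun x i => ?_⟩
  · rcases hg.1 i with h1 | h1 <;> rcases hh.1 (σ⁻¹ i) with h2 | h2 <;>
      simp only [h1, h2] <;> norm_num
  · rw [LinearEquiv.mul_apply, hg.2, hh.2, mul_inv_rev, Perm.mul_apply, mul_assoc]

theorem exists_liftPerm_pow (hg : IsSignedPerm g σ ε) (n : ℕ) :
    ∃ εn, IsSignedPerm (g ^ n) (σ ^ n) εn ∧ liftPerm σ ε ^ n = liftPerm (σ ^ n) εn := by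
  induction n with
  | zero => exact ⟨_, one, liftPerm_one_one.symm⟩
  | succ n ih =>
    obtain ⟨εn, hn, hlift⟩ := ih
    refine ⟨_, pow_succ g n ▸ pow_succ σ n ▸ hn.mul hg, ?_⟩
    rw [pow_succ, pow_succ, hlift, liftPerm_mul hn.1 hg.1]

theorem apply_single (hg : IsSignedPerm g σ ε) (j : Fin c) :
    g (Pi.single j 1) = Pi.single (σ j) (ε (σ j)) := by
  ext i
  rw [hg.2]
  by_cases hi : i = σ j
  · rw [hi, Perm.inv_eq_iff_eq.mpr rfl, Pi.single_eq_same, Pi.single_eq_same, mul_one]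
  · have hj : σ⁻¹ i ≠ j := fun h => hi (Perm.eq_inv_iff_eq.mp h.symm).symm
    rw [Pi.single_eq_of_ne hi, Pi.single_eq_of_ne hj, mul_zero]

theorem eq_of_apply_eq_smul {s : ℝ} (hg : IsSignedPerm g σ ε) (hs : ∀ x, g x = s • x) :
    σ = 1 ∧ ε = fun _ => s := by
  have hsingle : ∀ j, (Pi.single (σ j) (ε (σ j)) : Fin c → ℝ) = Pi.single j s := fun j => by
    rw [← hg.apply_single, hs, ← Pi.single_smul', smul_eq_mul, mul_one]
  have hσ : σ = 1 := Equiv.ext fun j => by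
    by_contra hj
    have := congrFun (hsingle j) (σ j)
    rw [Pi.single_eq_same, Pi.single_eq_of_ne (show σ j ≠ j from hj)] at this
    rcases hg.1 (σ j) with h | h <;> simp [h] at this
  subst hσ
  exact ⟨rfl, funext fun j => by simpa using congrFun (hsingle j) j⟩

theorem inn_const_sub_apply (hg : IsSignedPerm g σ ε) (r : ℝ) :
    inn (fun _ => r) ((fun _ => r) - g fun _ => r) = 2 * r ^ 2 * #{i | ε i = -1} := by
  rw [inn, Finset.card_filter, Nat.cast_sum, mul_sum]
  refine sum_congr rfl fun i _ => ?_
  rw [Pi.sub_apply, hg.2]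
  rcases hg.1 i with h | h <;> norm_num [h]
  ring

end IsSignedPerm

theorem signed_perm_majorana_layer_vanishes_general (k : ℕ) (c m : ℕ)
    (hc : c = 12 * k) (hm : m = Nat.gcd 24 k) (hme : Even m)
    (g : (Fin c → ℝ) ≃ₗ[ℝ] (Fin c → ℝ))
    (hsp : ∃ σ : Equiv.Perm (Fin c), ∃ ε : Fin c → ℝ, IsSignedPerm g σ ε)
    (horder : orderOf g = m)
    (hhalf : ∀ x : Fin c → ℝ, (g ^ (m / 2)) x = -x) :
    ∃ n : ℤ,
      inn (fun _ => Real.sqrt 3) ((fun _ => Real.sqrt 3) - g (fun _ => Real.sqrt 3))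
        = ((4 * n : ℤ) : ℝ) := by
  obtain ⟨σ, ε, hg⟩ := hsp
  obtain ⟨εm, hgm, hliftm⟩ := hg.exists_liftPerm_pow m
  obtain ⟨εh, hgh, hlifth⟩ := hg.exists_liftPerm_pow (m / 2)
  obtain ⟨hσm, rfl⟩ := hgm.eq_of_apply_eq_smul (s := 1) fun x => by
    rw [← horder, pow_orderOf_eq_one, one_smul]; rfl
  obtain ⟨hσh, rfl⟩ := hgh.eq_of_apply_eq_smul (s := -1) fun x => by rw [hhalf, neg_one_smul]
  have hsign : Perm.sign (liftPerm σ ε) = 1 := by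
    refine Perm.sign_eq_one_of_pow_eq_one hme ?_ ?_ ?_
    · rw [hliftm, hσm, liftPerm_one_one]
    · rw [hlifth, hσh]
      exact liftPerm_one_neg_one_apply_ne
    · obtain ⟨d, hd⟩ : m ∣ k := hm ▸ Nat.gcd_dvd_right 24 k
      rw [Fintype.card_prod, Fintype.card_fin, Fintype.card_bool, hc, hd]
      exact ⟨12 * d, by ring⟩
  rw [sign_liftPerm] at hsign
  obtain ⟨t, ht⟩ := (neg_one_pow_eq_one_iff_even (by decide)).mp hsign
  refine ⟨3 * t, ?_⟩
  rw [hg.inn_const_sub_apply, ht, Real.sq_sqrt (by norm_num)]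
  push_cast
  ring

theorem signed_perm_majorana_layer_vanishes (k : ℕ) (hk : 1 ≤ k) (c m : ℕ)
    (hc : c = 12 * k) (hm : m = Nat.gcd 24 k) (hme : Even m)
    (g : (Fin c → ℝ) ≃ₗ[ℝ] (Fin c → ℝ))
    (hsp : ∃ σ : Equiv.Perm (Fin c), ∃ ε : Fin c → ℝ, IsSignedPerm g σ ε)
    (horder : orderOf g = m)
    (hhalf : ∀ x : Fin c → ℝ, (g ^ (m / 2)) x = -x)
    (hthird : 3 ∣ m → ∃ σ' : Equiv.Perm (Fin c), ∃ ε' : Fin c → ℝ,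
      IsSignedPerm (g ^ (m / 3)) σ' ε' ∧ σ' ^ 3 = 1 ∧ ∀ i, σ' i ≠ i) :
    ∃ n : ℤ,
      inn (fun _ => Real.sqrt 3) ((fun _ => Real.sqrt 3) - g (fun _ => Real.sqrt 3))
        = ((4 * n : ℤ) : ℝ) :=
  signed_perm_majorana_layer_vanishes_general k c m hc hm hme g hsp horder hhalf
end
end
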